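/- arXiv:1802.03160 — 3 statements merged into one kernel-verified Lean document; each statement's English description precedes it below -/
import Mathlib

section
/- Let 1 ≤ β ≤ ℓ and k ≥ 5. If the strings a and b are far from being disjoint, i.e., there are at least ℓ²/12 pairs (i,r) with a_{ir} = b_{ir} = 1, then every k-spanner of G(ℓ,β) contains at least (β²/12)·ℓ² edges of D. -/
namespace Spanner

/-- Vertices of the graph `G(ℓ,β)`. -/
inductive V : Type
  | x1 : ℕ → V
  | x2 : ℕ → V
  | y1 : ℕ → V
  | y2 : ℕ → V
  | y3 : ℕ → V
  | xx : ℕ → ℕ → V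
  | yy : ℕ → ℕ → V
  deriving DecidableEq

/-- The directed edges of the graph `G(ℓ,β)` (with input strings `a`, `b`,
where `a i j = true` means `a_{ij} = 1`). -/
def Edge (ℓ β : ℕ) (a b : ℕ → ℕ → Bool) : V → V → Prop := fun u w =>
  (∃ i, 1 ≤ i ∧ i ≤ ℓ ∧ u = V.x1 i ∧ w = V.y1 i) ∨
  (∃ i, 1 ≤ i ∧ i ≤ ℓ ∧ u = V.x2 i ∧ w = V.y2 i) ∨
  (∃ i j r s, 1 ≤ i ∧ i ≤ ℓ ∧ 1 ≤ r ∧ r ≤ ℓ ∧ 1 ≤ j ∧ j ≤ β ∧ 1 ≤ s ∧ s ≤ β ∧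
    u = V.xx i j ∧ w = V.yy r s) ∨
  (∃ i j, 1 ≤ i ∧ i ≤ ℓ ∧ 1 ≤ j ∧ j ≤ β ∧ u = V.xx i j ∧ w = V.x1 i) ∨
  (∃ i j, 1 ≤ i ∧ i ≤ ℓ ∧ 1 ≤ j ∧ j ≤ β ∧ u = V.y3 i ∧ w = V.yy i j) ∨
  (∃ i, 1 ≤ i ∧ i ≤ ℓ ∧ u = V.y2 i ∧ w = V.y3 i) ∨
  (∃ i j, 1 ≤ i ∧ i ≤ ℓ ∧ 1 ≤ j ∧ j ≤ ℓ ∧ a i j = false ∧ u = V.x1 i ∧ w = V.x2 j) ∨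
  (∃ i j, 1 ≤ i ∧ i ≤ ℓ ∧ 1 ≤ j ∧ j ≤ ℓ ∧ b i j = false ∧ u = V.y1 i ∧ w = V.y2 j)


/-- Membership in the dense bipartite part `D` of `G(ℓ,β)`. -/
def InD (ℓ β : ℕ) : V → V → Prop := fun u w =>
  ∃ i j r s, 1 ≤ i ∧ i ≤ ℓ ∧ 1 ≤ r ∧ r ≤ ℓ ∧ 1 ≤ j ∧ j ≤ β ∧ 1 ≤ s ∧ s ≤ β ∧
    u = V.xx i j ∧ w = V.yy r s

/-- A directed walk of a given length with all edges satisfying `E`. -/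
inductive Walk (E : V → V → Prop) : V → V → ℕ → Prop
  | nil (v : V) : Walk E v v 0
  | cons {u v w : V} {n : ℕ} : E u v → Walk E v w n → Walk E u w (n + 1)

/-- `H` is a `k`-spanner of `G(ℓ,β)`: a subset of the edges such that every edge `(u,w)`
of the graph is connected by a directed path of length at most `k` of edges of `H`. -/
def IsSpanner (ℓ β k : ℕ) (a b : ℕ → ℕ → Bool) (H : Set (V × V)) : Prop :=
  (∀ p ∈ H, Edge ℓ β a b p.1 p.2) ∧
  (∀ u w, Edge ℓ β a b u w → ∃ n, n ≤ k ∧ Walk (fun x y => (x, y) ∈ H) u w n)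


section Aux

variable {ℓ β : ℕ} {a b : ℕ → ℕ → Bool}

lemma walk_mono {E E' : V → V → Prop} (h : ∀ x y, E x y → E' x y) :
    ∀ {u w : V} {n : ℕ}, Walk E u w n → Walk E' u w n := by
  intro u w n hw
  induction hw with
  | nil v => exact Walk.nil v
  | cons e _ ih => exact Walk.cons (h _ _ e) ih

lemma walk_yy {p q : ℕ} {w : V} {n : ℕ}
    (hw : Walk (Edge ℓ β a b) (V.yy p q) w n) : w = V.yy p q := by
  cases hw with
  | nil => rfl
  | cons e _ =>
    simp only [Edge] at e
    rcases e with ⟨_,_,_,h,_⟩|⟨_,_,_,h,_⟩|⟨_,_,_,_,_,_,_,_,_,_,_,_,h,_⟩|⟨_,_,_,_,_,_,h,_⟩|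
      ⟨_,_,_,_,_,_,h,_⟩|⟨_,_,_,h,_⟩|⟨_,_,_,_,_,_,_,h,_⟩|⟨_,_,_,_,_,_,_,h,_⟩ <;> simp at h

lemma walk_y3 {m r s : ℕ} {n : ℕ}
    (hw : Walk (Edge ℓ β a b) (V.y3 m) (V.yy r s) n) : m = r := by
  cases hw with
  | cons e hw' =>
    simp only [Edge] at e
    rcases e with ⟨_,_,_,h,_⟩|⟨_,_,_,h,_⟩|⟨_,_,_,_,_,_,_,_,_,_,_,_,h,_⟩|⟨_,_,_,_,_,_,h,_⟩|
      ⟨i,j,_,_,_,_,h1,h2⟩|⟨_,_,_,h,_⟩|⟨_,_,_,_,_,_,_,h,_⟩|⟨_,_,_,_,_,_,_,h,_⟩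
    · simp at h
    · simp at h
    · simp at h
    · simp at h
    · obtain rfl : m = i := by simpa using h1
      subst h2
      have h3 := walk_yy hw'
      exact ((by simpa using h3 : r = m ∧ s = j).1).symm
    · simp at h
    · simp at h
    · simp at h

lemma walk_y2 {m r s : ℕ} {n : ℕ}
    (hw : Walk (Edge ℓ β a b) (V.y2 m) (V.yy r s) n) : m = r := by
  cases hw with
  | cons e hw' =>
    simp only [Edge] at e
    rcases e with ⟨_,_,_,h,_⟩|⟨_,_,_,h,_⟩|⟨_,_,_,_,_,_,_,_,_,_,_,_,h,_⟩|⟨_,_,_,_,_,_,h,_⟩|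
      ⟨_,_,_,_,_,_,h,_⟩|⟨i,_,_,h1,h2⟩|⟨_,_,_,_,_,_,_,h,_⟩|⟨_,_,_,_,_,_,_,h,_⟩
    · simp at h
    · simp at h
    · simp at h
    · simp at h
    · simp at h
    · obtain rfl : m = i := by simpa using h1
      subst h2
      exact walk_y3 hw'
    · simp at h
    · simp at h

lemma walk_x2 {m r s : ℕ} {n : ℕ}
    (hw : Walk (Edge ℓ β a b) (V.x2 m) (V.yy r s) n) : m = r := by
  cases hw with
  | cons e hw' =>
    simp only [Edge] at e
    rcases e with ⟨_,_,_,h,_⟩|⟨i,_,_,h1,h2⟩|⟨_,_,_,_,_,_,_,_,_,_,_,_,h,_⟩|⟨_,_,_,_,_,_,h,_⟩|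
      ⟨_,_,_,_,_,_,h,_⟩|⟨_,_,_,h,_⟩|⟨_,_,_,_,_,_,_,h,_⟩|⟨_,_,_,_,_,_,_,h,_⟩
    · simp at h
    · obtain rfl : m = i := by simpa using h1
      subst h2
      exact walk_y2 hw'
    · simp at h
    · simp at h
    · simp at h
    · simp at h
    · simp at h
    · simp at h

lemma walk_y1 {i r s : ℕ} {n : ℕ}
    (hw : Walk (Edge ℓ β a b) (V.y1 i) (V.yy r s) n) : b i r = false := by
  cases hw with
  | cons e hw' =>
    simp only [Edge] at e
    rcases e with ⟨_,_,_,h,_⟩|⟨_,_,_,h,_⟩|⟨_,_,_,_,_,_,_,_,_,_,_,_,h,_⟩|⟨_,_,_,_,_,_,h,_⟩|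
      ⟨_,_,_,_,_,_,h,_⟩|⟨_,_,_,h,_⟩|⟨_,_,_,_,_,_,_,h,_⟩|⟨i',m,_,_,_,_,hb,h1,h2⟩
    · simp at h
    · simp at h
    · simp at h
    · simp at h
    · simp at h
    · simp at h
    · simp at h
    · obtain rfl : i = i' := by simpa using h1
      subst h2
      have := walk_y2 hw'
      subst this
      exact hb

lemma walk_x1 {i r s : ℕ} {n : ℕ}
    (hw : Walk (Edge ℓ β a b) (V.x1 i) (V.yy r s) n) :
    a i r = false ∨ b i r = false := by
  cases hw with
  | cons e hw' =>
    simp only [Edge] at e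
    rcases e with ⟨i',_,_,h1,h2⟩|⟨_,_,_,h,_⟩|⟨_,_,_,_,_,_,_,_,_,_,_,_,h,_⟩|⟨_,_,_,_,_,_,h,_⟩|
      ⟨_,_,_,_,_,_,h,_⟩|⟨_,_,_,h,_⟩|⟨i',m,_,_,_,_,ha,h1,h2⟩|⟨_,_,_,_,_,_,_,h,_⟩
    · obtain rfl : i = i' := by simpa using h1
      subst h2
      exact Or.inr (walk_y1 hw')
    · simp at h
    · simp at h
    · simp at h
    · simp at h
    · simp at h
    · obtain rfl : i = i' := by simpa using h1
      subst h2
      have := walk_x2 hw'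
      subst this
      exact Or.inl ha
    · simp at h

end Aux

/-- If `1 ≤ β ≤ ℓ`, `k ≥ 5` and the strings `a`, `b` are far from being
disjoint (at least `ℓ²/12` pairs `(i,r)` with `a_{ir} = b_{ir} = 1`), then every
`k`-spanner of `G(ℓ,β)` contains at least `(β²/12)·ℓ²` edges of `D`. -/
theorem statement5 (ℓ β k : ℕ) (hβ : 1 ≤ β) (hbl : β ≤ ℓ) (hk : 5 ≤ k)
    (a b : ℕ → ℕ → Bool)
    (hfar : (ℓ : ℝ) ^ 2 / 12 ≤
      ({p : ℕ × ℕ | 1 ≤ p.1 ∧ p.1 ≤ ℓ ∧ 1 ≤ p.2 ∧ p.2 ≤ ℓ ∧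
        a p.1 p.2 = true ∧ b p.1 p.2 = true}.ncard : ℝ))
    (H : Set (V × V)) (hH : IsSpanner ℓ β k a b H) :
    (β : ℝ) ^ 2 / 12 * (ℓ : ℝ) ^ 2 ≤ ({p ∈ H | InD ℓ β p.1 p.2}.ncard : ℝ) := by
  classical
  obtain ⟨hHsub, hspan⟩ := hH
  have hmono : ∀ x y : V, (x, y) ∈ H → Edge ℓ β a b x y := fun x y h => hHsub (x, y) h
  have key : ∀ i r j s : ℕ, 1 ≤ i → i ≤ ℓ → 1 ≤ r → r ≤ ℓ → 1 ≤ j → j ≤ β → 1 ≤ s → s ≤ β →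
      a i r = true → b i r = true → (V.xx i j, V.yy r s) ∈ H := by
    intro i r j s hi1 hi2 hr1 hr2 hj1 hj2 hs1 hs2 ha hb
    obtain ⟨n, -, hw⟩ := hspan (V.xx i j) (V.yy r s)
      (Or.inr (Or.inr (Or.inl ⟨i, j, r, s, hi1, hi2, hr1, hr2, hj1, hj2, hs1, hs2, rfl, rfl⟩)))
    cases hw with
    | cons e hw' =>
      have eE := hmono _ _ e
      simp only [Edge] at eE
      rcases eE with ⟨_,_,_,h,_⟩|⟨_,_,_,h,_⟩|⟨i',j',r',s',_,_,_,_,_,_,_,_,h1,h2⟩|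
        ⟨i',j',_,_,_,_,h1,h2⟩|⟨_,_,_,_,_,_,h,_⟩|⟨_,_,_,h,_⟩|⟨_,_,_,_,_,_,_,h,_⟩|
        ⟨_,_,_,_,_,_,_,h,_⟩
      · simp at h
      · simp at h
      · subst h2
        have h3 := walk_yy (walk_mono hmono hw')
        obtain ⟨rfl, rfl⟩ : r = r' ∧ s = s' := by simpa using h3
        exact e
      · obtain ⟨rfl, rfl⟩ : i = i' ∧ j = j' := by simpa using h1
        subst h2
        rcases walk_x1 (walk_mono hmono hw') with hfa | hfb
        · simp [hfa] at ha
        · simp [hfb] at hb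
      · simp at h
      · simp at h
      · simp at h
      · simp at h
  set S : Set (ℕ × ℕ) := {p : ℕ × ℕ | 1 ≤ p.1 ∧ p.1 ≤ ℓ ∧ 1 ≤ p.2 ∧ p.2 ≤ ℓ ∧
    a p.1 p.2 = true ∧ b p.1 p.2 = true} with hSdef
  have hSfin : S.Finite := by
    apply Set.Finite.subset (Set.finite_Icc ((1, 1) : ℕ × ℕ) (ℓ, ℓ))
    rintro ⟨i, r⟩ ⟨h1, h2, h3, h4, -, -⟩
    simp [Set.mem_Icc, Prod.le_def, h1, h2, h3, h4]
  set g : (ℕ × ℕ) × ℕ × ℕ → V × V := fun q => (V.xx q.1.1 q.2.1, V.yy q.1.2 q.2.2) with hg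
  have ginj : Function.Injective g := by
    rintro ⟨⟨i, r⟩, j, s⟩ ⟨⟨i', r'⟩, j', s'⟩ h
    simp only [hg, Prod.mk.injEq, V.xx.injEq, V.yy.injEq] at h
    obtain ⟨⟨h1, h2⟩, h3, h4⟩ := h
    simp_all
  set F : Finset (V × V) :=
    (hSfin.toFinset ×ˢ (Finset.Icc 1 β ×ˢ Finset.Icc 1 β)).image g with hF
  have hFcard : F.card = S.ncard * (β * β) := by
    rw [hF, Finset.card_image_of_injective _ ginj, Finset.card_product, Finset.card_product,
      Nat.card_Icc, Set.ncard_eq_toFinset_card _ hSfin]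
    simp
  have hTfin : {p ∈ H | InD ℓ β p.1 p.2}.Finite := by
    apply Set.Finite.subset
      (((Set.finite_Icc ((1, 1) : ℕ × ℕ) (ℓ, ℓ)).prod
        (Set.finite_Icc ((1, 1) : ℕ × ℕ) (β, β))).image g)
    rintro ⟨u, w⟩ ⟨-, i, j, r, s, hi1, hi2, hr1, hr2, hj1, hj2, hs1, hs2, rfl, rfl⟩
    exact ⟨((i, r), (j, s)), by
      simp [Set.mem_prod, Set.mem_Icc, Prod.le_def, hi1, hi2, hr1, hr2, hj1, hj2, hs1, hs2], rfl⟩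
  have hsub : ↑F ⊆ {p ∈ H | InD ℓ β p.1 p.2} := by
    intro p hp
    simp only [hF, Finset.coe_image, Set.mem_image, Finset.mem_coe, Finset.mem_product,
      Set.Finite.mem_toFinset, Finset.mem_Icc] at hp
    obtain ⟨⟨⟨i, r⟩, j, s⟩, ⟨hS', ⟨hj1, hj2⟩, hs1, hs2⟩, rfl⟩ := hp
    obtain ⟨hi1, hi2, hr1, hr2, ha, hb⟩ := hS'
    exact ⟨key i r j s hi1 hi2 hr1 hr2 hj1 hj2 hs1 hs2 ha hb,
      i, j, r, s, hi1, hi2, hr1, hr2, hj1, hj2, hs1, hs2, rfl, rfl⟩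
  have hcount : S.ncard * (β * β) ≤ {p ∈ H | InD ℓ β p.1 p.2}.ncard := by
    rw [← hFcard, ← Set.ncard_coe_finset]
    exact Set.ncard_le_ncard hsub hTfin
  have h1 : ((S.ncard * (β * β) : ℕ) : ℝ) ≤ (({p ∈ H | InD ℓ β p.1 p.2}.ncard : ℕ) : ℝ) :=
    Nat.cast_le.mpr hcount
  push_cast at h1
  have h2 : (β : ℝ) * β * ((ℓ : ℝ) ^ 2 / 12) ≤ (β : ℝ) * β * (S.ncard : ℝ) := by
    apply mul_le_mul_of_nonneg_left hfar
    positivity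
  nlinarith [h1, h2]


end Spanner
end

section
/- If C is a vertex cover of G, then the edge set H_C consisting of all weight-0 edges of G_S together with the edges {v₁, v₂} for every v ∈ C is a 2-spanner of G_S of cost exactly |C|. -/
namespace TwoSpannerVC

variable {α : Type} [Fintype α] [DecidableEq α]

/-- The edges of the weighted graph `G_S` built from a simple graph `G` with vertex IDs
given by `id`.  The vertices of `G_S` are the pairs `(v, t)` for `t : Fin 3`, representing
`v₁, v₂, v₃`. -/
def GS (G : SimpleGraph α) (id : α → ℕ) : Set (Sym2 (α × Fin 3)) :=
  {e | (∃ v : α, e = s((v, 0), (v, 1)) ∨ e = s((v, 0), (v, 2)) ∨ e = s((v, 1), (v, 2))) ∨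
       (∃ v u : α, G.Adj v u ∧ id v < id u ∧
         (e = s((v, 0), (u, 0)) ∨ e = s((v, 1), (u, 1)) ∨ e = s((v, 0), (u, 1))))}

open scoped Classical in
/-- The weight of an edge of `G_S`: the triangle edges `{v₁,v₂}` have weight 1, the edges
`{v₁,u₂}` corresponding to edges of `G` have weight 2, and all other edges weight 0. -/
noncomputable def weight (G : SimpleGraph α) (id : α → ℕ) (e : Sym2 (α × Fin 3)) : ℕ :=
  if ∃ v : α, e = s((v, 0), (v, 1)) then 1
  else if ∃ v u : α, G.Adj v u ∧ id v < id u ∧ e = s((v, 0), (u, 1)) then 2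
  else 0

/-- The cost of a set of edges of `G_S`: the sum of the weights of its edges. -/
noncomputable def cost (G : SimpleGraph α) (id : α → ℕ) (H : Set (Sym2 (α × Fin 3))) : ℕ :=
  ∑ᶠ e ∈ H, weight G id e

/-- The edge `{x,y}` is covered by `H`: it belongs to `H` or there is a path of length 2
between `x` and `y` in `H`. -/
def Covered (H : Set (Sym2 (α × Fin 3))) (x y : α × Fin 3) : Prop :=
  s(x, y) ∈ H ∨ ∃ z, s(x, z) ∈ H ∧ s(z, y) ∈ H

/-- `H` is a 2-spanner of `G_S`: a subset of its edges covering every edge of `G_S`. -/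
def IsTwoSpanner (G : SimpleGraph α) (id : α → ℕ) (H : Set (Sym2 (α × Fin 3))) : Prop :=
  H ⊆ GS G id ∧ ∀ x y : α × Fin 3, s(x, y) ∈ GS G id → Covered H x y

/-- `C` is a vertex cover of `G`. -/
def IsVertexCover (G : SimpleGraph α) (C : Set α) : Prop :=
  ∀ v u : α, G.Adj v u → v ∈ C ∨ u ∈ C

-- weight lemmas
lemma weight_01 (G : SimpleGraph α) (id : α → ℕ) (v : α) :
    weight G id s((v, 0), (v, 1)) = 1 := by
  rw [weight, if_pos ⟨v, rfl⟩]

lemma weight_02 (G : SimpleGraph α) (id : α → ℕ) (v : α) :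
    weight G id s((v, 0), (v, 2)) = 0 := by
  rw [weight, if_neg, if_neg]
  · rintro ⟨w, u, -, -, h⟩
    rw [Sym2.eq_iff] at h
    simp [Prod.ext_iff, Fin.ext_iff] at h
  · rintro ⟨w, h⟩
    rw [Sym2.eq_iff] at h
    simp [Prod.ext_iff, Fin.ext_iff] at h

lemma weight_12 (G : SimpleGraph α) (id : α → ℕ) (v : α) :
    weight G id s((v, 1), (v, 2)) = 0 := by
  rw [weight, if_neg, if_neg]
  · rintro ⟨w, u, -, -, h⟩
    rw [Sym2.eq_iff] at h
    simp [Prod.ext_iff, Fin.ext_iff] at h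
  · rintro ⟨w, h⟩
    rw [Sym2.eq_iff] at h
    simp [Prod.ext_iff, Fin.ext_iff] at h

lemma weight_00 (G : SimpleGraph α) (id : α → ℕ) (v u : α) (hvu : v ≠ u) :
    weight G id s((v, 0), (u, 0)) = 0 := by
  rw [weight, if_neg, if_neg]
  · rintro ⟨w, x, -, -, h⟩
    rw [Sym2.eq_iff] at h
    simp [Prod.ext_iff, Fin.ext_iff] at h
  · rintro ⟨w, h⟩
    rw [Sym2.eq_iff] at h
    simp [Prod.ext_iff, Fin.ext_iff] at h

lemma weight_11 (G : SimpleGraph α) (id : α → ℕ) (v u : α) :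
    weight G id s((v, 1), (u, 1)) = 0 := by
  rw [weight, if_neg, if_neg]
  · rintro ⟨w, x, -, -, h⟩
    rw [Sym2.eq_iff] at h
    simp [Prod.ext_iff, Fin.ext_iff] at h
  · rintro ⟨w, h⟩
    rw [Sym2.eq_iff] at h
    simp [Prod.ext_iff, Fin.ext_iff] at h

/-- If `C` is a vertex cover of `G`, then the set `H_C` of all weight-0
edges of `G_S` together with the edges `{v₁,v₂}` for `v ∈ C` is a 2-spanner of `G_S` of
cost exactly `|C|`. -/
theorem statement9 (G : SimpleGraph α) (id : α → ℕ) (hid : Function.Injective id)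
    (C : Set α) (hC : IsVertexCover G C) :
    IsTwoSpanner G id
      ({e ∈ GS G id | weight G id e = 0} ∪ {e | ∃ v ∈ C, e = s((v, 0), (v, 1))}) ∧
    cost G id
      ({e ∈ GS G id | weight G id e = 0} ∪ {e | ∃ v ∈ C, e = s((v, 0), (v, 1))}) =
      C.ncard := by
  set H : Set (Sym2 (α × Fin 3)) :=
    {e ∈ GS G id | weight G id e = 0} ∪ {e | ∃ v ∈ C, e = s((v, 0), (v, 1))} with hH
  have hsub : H ⊆ GS G id := by
    rintro e (⟨he, -⟩ | ⟨v, -, rfl⟩)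
    · exact he
    · exact Or.inl ⟨v, Or.inl rfl⟩
  -- canonical covered lemmas
  have hmem02 : ∀ v : α, s((v, 0), (v, 2)) ∈ H := fun v =>
    Or.inl ⟨Or.inl ⟨v, Or.inr (Or.inl rfl)⟩, weight_02 G id v⟩
  have hmem12 : ∀ v : α, s((v, 1), (v, 2)) ∈ H := fun v =>
    Or.inl ⟨Or.inl ⟨v, Or.inr (Or.inr rfl)⟩, weight_12 G id v⟩
  have covsym : ∀ x y : α × Fin 3, Covered H x y → Covered H y x := by
    rintro x y (h | ⟨z, h1, h2⟩)
    · exact Or.inl (by rwa [Sym2.eq_swap])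
    · exact Or.inr ⟨z, by rwa [Sym2.eq_swap], by rwa [Sym2.eq_swap]⟩
  have cov01 : ∀ v : α, Covered H (v, 0) (v, 1) := by
    intro v
    refine Or.inr ⟨(v, 2), hmem02 v, ?_⟩
    rw [Sym2.eq_swap]
    exact hmem12 v
  have cov6 : ∀ v u : α, G.Adj v u → id v < id u → Covered H (v, 0) (u, 1) := by
    intro v u hadj hlt
    have hne : v ≠ u := fun h => absurd (congrArg id h) (Nat.ne_of_lt hlt)
    have hmem00 : s((v, 0), (u, 0)) ∈ H :=
      Or.inl ⟨Or.inr ⟨v, u, hadj, hlt, Or.inl rfl⟩, weight_00 G id v u hne⟩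
    have hmem11 : s((v, 1), (u, 1)) ∈ H :=
      Or.inl ⟨Or.inr ⟨v, u, hadj, hlt, Or.inr (Or.inl rfl)⟩, weight_11 G id v u⟩
    rcases hC v u hadj with hv | hu
    · refine Or.inr ⟨(v, 1), Or.inr ⟨v, hv, rfl⟩, hmem11⟩
    · refine Or.inr ⟨(u, 0), hmem00, Or.inr ⟨u, hu, rfl⟩⟩
  have hcov : ∀ x y : α × Fin 3, s(x, y) ∈ GS G id → Covered H x y := by
    intro x y h
    rcases h with ⟨v, h | h | h⟩ | ⟨v, u, hadj, hlt, h | h | h⟩ <;>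
      rcases Sym2.eq_iff.mp h with ⟨hx, hy⟩ | ⟨hx, hy⟩ <;> subst hx <;> subst hy
    · exact cov01 v
    · exact covsym _ _ (cov01 v)
    · exact Or.inl (hmem02 v)
    · exact covsym _ _ (Or.inl (hmem02 v))
    · exact Or.inl (hmem12 v)
    · exact covsym _ _ (Or.inl (hmem12 v))
    · exact Or.inl (Or.inl ⟨Or.inr ⟨v, u, hadj, hlt, Or.inl rfl⟩,
        weight_00 G id v u (fun h => absurd (congrArg id h) (Nat.ne_of_lt hlt))⟩)
    · exact covsym _ _ (Or.inl (Or.inl ⟨Or.inr ⟨v, u, hadj, hlt, Or.inl rfl⟩,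
        weight_00 G id v u (fun h => absurd (congrArg id h) (Nat.ne_of_lt hlt))⟩))
    · exact Or.inl (Or.inl ⟨Or.inr ⟨v, u, hadj, hlt, Or.inr (Or.inl rfl)⟩, weight_11 G id v u⟩)
    · exact covsym _ _ (Or.inl (Or.inl ⟨Or.inr ⟨v, u, hadj, hlt, Or.inr (Or.inl rfl)⟩,
        weight_11 G id v u⟩))
    · exact cov6 v u hadj hlt
    · exact covsym _ _ (cov6 v u hadj hlt)
  refine ⟨⟨hsub, hcov⟩, ?_⟩
  -- cost
  have hdisj : Disjoint {e ∈ GS G id | weight G id e = 0}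
      {e : Sym2 (α × Fin 3) | ∃ v ∈ C, e = s((v, 0), (v, 1))} := by
    rw [Set.disjoint_left]
    rintro e ⟨-, hw⟩ ⟨v, -, rfl⟩
    rw [weight_01] at hw
    exact one_ne_zero hw
  have himg : {e : Sym2 (α × Fin 3) | ∃ v ∈ C, e = s((v, 0), (v, 1))} =
      (fun v : α => s((v, 0), (v, 1))) '' C := by
    ext e
    simp [Set.mem_image, eq_comm]
  have hinj : Set.InjOn (fun v : α => (s((v, 0), (v, 1)) : Sym2 (α × Fin 3))) C := by
    intro a _ b _ h
    rw [Sym2.eq_iff] at h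
    simp only [Prod.ext_iff, Fin.ext_iff] at h
    rcases h with ⟨⟨h, -⟩, -⟩ | ⟨⟨-, h⟩, -⟩
    · exact h
    · simp at h
  rw [cost, hH, finsum_mem_union hdisj (Set.toFinite _) (Set.toFinite _),
    finsum_mem_of_eqOn_zero (fun e he => he.2), zero_add, himg,
    finsum_mem_image hinj]
  have : ∀ v ∈ C, weight G id s((v, 0), (v, 1)) = 1 := fun v _ => weight_01 G id v
  rw [finsum_mem_congr rfl this, finsum_mem_eq_finite_toFinset_sum _ (Set.toFinite C)]
  rw [Set.ncard_eq_toFinset_card C (Set.toFinite C)]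
  simp


end TwoSpannerVC
end

section
/- If H is a 2-spanner of G_S of cost w(H), then there exists a vertex cover of G of size at most w(H). -/
namespace TwoSpannerVC

variable {α : Type} [Fintype α] [DecidableEq α]

/-- The vertex cover extracted from `H`. -/
def Cset (G : SimpleGraph α) (id : α → ℕ) (H : Set (Sym2 (α × Fin 3))) : Set α :=
  {v | ∃ e ∈ H, 1 ≤ weight G id e ∧ ((v, (0 : Fin 3)) ∈ e ∨ (v, (1 : Fin 3)) ∈ e)}

lemma weight_tri (G : SimpleGraph α) (id : α → ℕ) (a : α) :
    weight G id s((a, 0), (a, 1)) = 1 := by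
  rw [weight, if_pos ⟨a, rfl⟩]

lemma weight_cross (G : SimpleGraph α) (id : α → ℕ) {a b : α} (hadj : G.Adj a b)
    (hlt : id a < id b) : weight G id s((a, 0), (b, 1)) = 2 := by
  rw [weight, if_neg, if_pos ⟨a, b, hadj, hlt, rfl⟩]
  rintro ⟨c, hc⟩
  simp only [Sym2.eq_iff, Prod.mk.injEq] at hc
  rcases hc with ⟨⟨rfl, -⟩, ⟨rfl, h⟩⟩ | ⟨⟨-, h⟩, -⟩
  · exact hadj.ne rfl
  · exact absurd h (by decide)

lemma weight_cases (G : SimpleGraph α) (id : α → ℕ) (e : Sym2 (α × Fin 3)) :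
    weight G id e = 0 ∨ (weight G id e = 1 ∧ ∃ a : α, e = s((a, 0), (a, 1))) ∨
      (weight G id e = 2 ∧ ∃ a b : α, e = s((a, 0), (b, 1))) := by
  rw [weight]
  split_ifs with h1 h2
  · exact Or.inr (Or.inl ⟨rfl, h1⟩)
  · obtain ⟨a, b, -, -, he⟩ := h2
    exact Or.inr (Or.inr ⟨rfl, a, b, he⟩)
  · exact Or.inl rfl

lemma cover_aux (G : SimpleGraph α) (id : α → ℕ) (H : Set (Sym2 (α × Fin 3)))
    (hH : IsTwoSpanner G id H) {v u : α} (hadj : G.Adj v u) (hlt : id v < id u) :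
    v ∈ Cset G id H ∨ u ∈ Cset G id H := by
  have hGS : s(((v, (0 : Fin 3))), (u, (1 : Fin 3))) ∈ GS G id :=
    Or.inr ⟨v, u, hadj, hlt, Or.inr (Or.inr rfl)⟩
  rcases hH.2 _ _ hGS with h | ⟨⟨w, t⟩, h1, h2⟩
  · left
    exact ⟨_, h, by rw [weight_cross G id hadj hlt]; omega, Or.inl (Sym2.mem_mk_left _ _)⟩
  · have h1' := hH.1 h1
    have h2' := hH.1 h2
    simp only [GS, Set.mem_setOf_eq, Sym2.eq_iff, Prod.mk.injEq, Fin.reduceEq,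
      and_true, true_and, and_false, false_and, false_or, or_false] at h1' h2'
    rcases h1' with ⟨a, ⟨rfl, rfl, rfl⟩ | ⟨rfl, rfl, rfl⟩⟩ |
      ⟨a, b, hab, hlab, (⟨rfl, rfl, rfl⟩ | ⟨rfl, rfl, rfl⟩) | ⟨rfl, rfl, rfl⟩⟩
    · -- w = v, t = 1 : triangle edge {v₁,v₂} ∈ H
      exact Or.inl ⟨_, h1, by rw [weight_tri], Or.inl (Sym2.mem_mk_left _ _)⟩
    · -- w = v, t = 2 : impossible via h2'
      exfalso
      rcases h2' with ⟨c, ⟨⟨-, h0⟩, -⟩ | ⟨⟨rfl, -⟩, rfl⟩⟩ |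
        ⟨c, d, -, -, (⟨⟨-, h0⟩, -⟩ | ⟨⟨-, h0⟩, -⟩) | ⟨⟨-, h0⟩, -⟩⟩
      · exact absurd h0 (by decide)
      · exact hadj.ne rfl
      · exact absurd h0 (by decide)
      · exact absurd h0 (by decide)
      · exact absurd h0 (by decide)
    · -- t = 0 : use h2'
      right
      rcases h2' with ⟨c, ⟨⟨rfl, -⟩, rfl⟩ | ⟨⟨-, h0⟩, -⟩⟩ |
        ⟨c, d, hcd, hlcd, (⟨⟨-, h0⟩, -⟩ | ⟨⟨-, h0⟩, -⟩) | ⟨⟨rfl, -⟩, rfl⟩⟩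
      · exact ⟨_, h2, by rw [weight_tri], Or.inr (Sym2.mem_mk_right _ _)⟩
      · exact absurd h0 (by decide)
      · exact absurd h0 (by decide)
      · exact absurd h0 (by decide)
      · exact ⟨_, h2, by rw [weight_cross G id hcd hlcd]; omega,
          Or.inr (Sym2.mem_mk_right _ _)⟩
    · -- t = 0 (other orientation) : use h2'
      right
      rcases h2' with ⟨c, ⟨⟨rfl, -⟩, rfl⟩ | ⟨⟨-, h0⟩, -⟩⟩ |
        ⟨c, d, hcd, hlcd, (⟨⟨-, h0⟩, -⟩ | ⟨⟨-, h0⟩, -⟩) | ⟨⟨rfl, -⟩, rfl⟩⟩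
      · exact ⟨_, h2, by rw [weight_tri], Or.inr (Sym2.mem_mk_right _ _)⟩
      · exact absurd h0 (by decide)
      · exact absurd h0 (by decide)
      · exact absurd h0 (by decide)
      · exact ⟨_, h2, by rw [weight_cross G id hcd hlcd]; omega,
          Or.inr (Sym2.mem_mk_right _ _)⟩
    · -- t = 1, adj v w : weight-2 edge s((v,0),(w,1)) ∈ H
      exact Or.inl ⟨_, h1, by rw [weight_cross G id hab hlab]; omega,
        Or.inl (Sym2.mem_mk_left _ _)⟩

open scoped Classical in
lemma card_filter_le (G : SimpleGraph α) (id : α → ℕ) (e : Sym2 (α × Fin 3)) :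
    (Finset.univ.filter fun v : α =>
      1 ≤ weight G id e ∧ ((v, (0 : Fin 3)) ∈ e ∨ (v, (1 : Fin 3)) ∈ e)).card
      ≤ weight G id e := by
  rcases weight_cases G id e with hw | ⟨hw, a, rfl⟩ | ⟨hw, a, b, rfl⟩
  · simp [hw]
  · rw [hw]
    refine le_trans (Finset.card_le_card (fun v hv => ?_)) (le_of_eq (Finset.card_singleton a))
    simp only [Finset.mem_filter, Sym2.mem_iff, Prod.mk.injEq, Finset.mem_singleton] at hv ⊢
    rcases hv.2.2 with (⟨rfl, -⟩ | ⟨-, h0⟩) | (⟨-, h0⟩ | ⟨rfl, -⟩) <;>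
      first | rfl | exact absurd h0 (by decide)
  · rw [hw]
    refine le_trans (Finset.card_le_card (t := ({a, b} : Finset α)) (fun v hv => ?_))
      (le_trans (Finset.card_insert_le _ _) (by simp))
    simp only [Finset.mem_filter, Sym2.mem_iff, Prod.mk.injEq, Finset.mem_insert,
      Finset.mem_singleton] at hv ⊢
    rcases hv.2.2 with (⟨rfl, -⟩ | ⟨-, h0⟩) | (⟨-, h0⟩ | ⟨rfl, -⟩)
    · exact Or.inl rfl
    · exact absurd h0 (by decide)
    · exact absurd h0 (by decide)
    · exact Or.inr rfl

lemma card_bound (G : SimpleGraph α) (id : α → ℕ) (H : Set (Sym2 (α × Fin 3))) :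
    (Cset G id H).ncard ≤ cost G id H := by
  classical
  have hfin : H.Finite := Set.toFinite H
  set Hf := hfin.toFinset with hHf
  set f : Sym2 (α × Fin 3) → Finset α := fun e => Finset.univ.filter fun v : α =>
    1 ≤ weight G id e ∧ ((v, (0 : Fin 3)) ∈ e ∨ (v, (1 : Fin 3)) ∈ e) with hf
  have hsub : Cset G id H ⊆ ↑(Hf.biUnion f) := by
    rintro v ⟨e, he, hw, hm⟩
    simp only [Finset.coe_biUnion, Set.mem_iUnion, Finset.mem_coe]
    exact ⟨e, hfin.mem_toFinset.2 he, Finset.mem_filter.2 ⟨Finset.mem_univ v, hw, hm⟩⟩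
  have h1 : (Cset G id H).ncard ≤ (Hf.biUnion f).card := by
    rw [← Set.ncard_coe_finset]
    exact Set.ncard_le_ncard hsub (Hf.biUnion f).finite_toSet
  have h2 : (Hf.biUnion f).card ≤ ∑ e ∈ Hf, weight G id e :=
    le_trans (Finset.card_biUnion_le)
      (Finset.sum_le_sum fun e _ => card_filter_le G id e)
  have h3 : cost G id H = ∑ e ∈ Hf, weight G id e := by
    rw [cost, ← hfin.coe_toFinset, finsum_mem_coe_finset]
  omega

/-- If `H` is a 2-spanner of `G_S` of cost `w(H)`, then `G` has a
vertex cover of size at most `w(H)`. -/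
theorem statement10 (G : SimpleGraph α) (id : α → ℕ) (hid : Function.Injective id)
    (H : Set (Sym2 (α × Fin 3))) (hH : IsTwoSpanner G id H) :
    ∃ C : Set α, IsVertexCover G C ∧ C.ncard ≤ cost G id H := by
  refine ⟨Cset G id H, fun v u hadj => ?_, card_bound G id H⟩
  have hne : id v ≠ id u := fun h => hadj.ne (hid h)
  rcases hne.lt_or_gt with hlt | hlt
  · exact cover_aux G id H hH hadj hlt
  · exact (cover_aux G id H hH hadj.symm hlt).symm

end TwoSpannerVC
end
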